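/- Let K be an atomic unital free augmented directed complex of dimension n with n-dimensional basis element g. Then the double sequence ⟨K⟩ = ((∂⁻)^n g, (∂⁺)^n g | … | ∂⁻g, ∂⁺g | g, g | 0, 0 | …), i.e. the double sequence x with x_q^− = (∂⁻)^{n−q}g and x_q^+ = (∂⁺)^{n−q}g for 0 ≤ q ≤ n and x_q^± = 0 for q > n, is a member of νK. -/

import Mathlib

open Finsupp

/-- A free augmented directed complex, encoded by its distinguished graded basis:
`B` is the set of basis elements, `dim` the dimension function, `bd a` the boundary
chain of a basis element `a`, and `eps` the augmentation (supported in dimension 0). -/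
structure FADC where
  B : Type
  dim : B → ℕ
  bd : B → (B →₀ ℤ)
  eps : B → ℤ
  bd_dim : ∀ a b, b ∈ (bd a).support → dim b + 1 = dim a
  eps_dim : ∀ b, 0 < dim b → eps b = 0
  bd_bd : ∀ a : B, ((bd a).sum fun b n => n • bd b) = 0
  eps_bd : ∀ a : B, ((bd a).sum fun b n => n * eps b) = 0

namespace FADC

variable (K : FADC)

/-- The boundary homomorphism `∂`, extended to chains. -/
noncomputable def bdc (c : K.B →₀ ℤ) : K.B →₀ ℤ := c.sum fun b n => n • K.bd b

/-- The augmentation `ε`, extended to chains. -/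
noncomputable def epsc (c : K.B →₀ ℤ) : ℤ := c.sum fun b n => n * K.eps b

/-- `∂⁺c`, the positive part of `∂c`. -/
noncomputable def bdp (c : K.B →₀ ℤ) : K.B →₀ ℤ := (K.bdc c).mapRange (fun n => max n 0) (by simp)

/-- `∂⁻c`, the negative part of `∂c`. -/
noncomputable def bdm (c : K.B →₀ ℤ) : K.B →₀ ℤ := (-K.bdc c).mapRange (fun n => max n 0) (by simp)

/-- `K` is unital if `ε((∂⁻)^q a) = ε((∂⁺)^q a) = 1` for every `q`-dimensional
basis element `a`. -/
def Unital : Prop := ∀ a : K.B,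
  K.epsc (K.bdm^[K.dim a] (Finsupp.single a 1)) = 1 ∧
  K.epsc (K.bdp^[K.dim a] (Finsupp.single a 1)) = 1

/-- `K` is loop-free if its basis elements admit a (strict) partial order such that
for every basis element `a` and every `r > 0`, the basis elements occurring in
`(∂⁻)^r a` strictly precede those occurring in `(∂⁺)^r a`. -/
def LoopFree : Prop :=
  ∃ lt : K.B → K.B → Prop, IsStrictOrder K.B lt ∧
    ∀ (a : K.B) (r : ℕ), 0 < r →
      ∀ b ∈ (K.bdm^[r] (Finsupp.single a 1)).support,
        ∀ b' ∈ (K.bdp^[r] (Finsupp.single a 1)).support, lt b b'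

/-- `K` is atomic of dimension `n`. -/
def Atomic (n : ℕ) : Prop :=
  (∀ b : K.B, K.dim b ≤ n) ∧
  (∃! g : K.B, K.dim g = n) ∧
  (∀ b : K.B, K.dim b < n → ∃ a : K.B, K.dim b < K.dim a ∧
    (b ∈ (K.bdm (Finsupp.single a 1)).support ∨ b ∈ (K.bdp (Finsupp.single a 1)).support))

/-- `g_q^α(x)`: given `x_q^- = xq` and `x_{q+1}^α = c`, this is
`x_q^- + ∂⁺a_1 + … + ∂⁺a_k` where `a_1, …, a_k` are the terms of `c`. -/
noncomputable def gch (xq c : K.B →₀ ℤ) : K.B →₀ ℤ :=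
  xq + c.sum fun b n => n • K.bdp (Finsupp.single b 1)

/-- The negative chains `⟨K⟩_q^- = (∂⁻)^{n-q} g` of the canonical atom. -/
noncomputable def atomNeg (g : K.B) (n q : ℕ) : K.B →₀ ℤ :=
  if q ≤ n then K.bdm^[n - q] (Finsupp.single g 1) else 0

/-- The positive chains `⟨K⟩_q^+ = (∂⁺)^{n-q} g` of the canonical atom. -/
noncomputable def atomPos (g : K.B) (n q : ℕ) : K.B →₀ ℤ :=
  if q ≤ n then K.bdp^[n - q] (Finsupp.single g 1) else 0

end FADC

/-- Membership in `νK`: the double sequence `(x_0^-, x_0^+ | x_1^-, x_1^+ | …)`,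
given by `xm` and `xp`, is a member of `νK`. -/
structure NuMem (K : FADC) (xm xp : ℕ → (K.B →₀ ℤ)) : Prop where
  dim_m : ∀ q, ∀ b ∈ (xm q).support, K.dim b = q
  dim_p : ∀ q, ∀ b ∈ (xp q).support, K.dim b = q
  nonneg_m : ∀ q b, 0 ≤ xm q b
  nonneg_p : ∀ q b, 0 ≤ xp q b
  fin : ∃ n, ∀ q, n < q → xm q = 0 ∧ xp q = 0
  eps_m : K.epsc (xm 0) = 1
  eps_p : K.epsc (xp 0) = 1
  bd_m : ∀ q, K.bdc (xm (q + 1)) = xp q - xm q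
  bd_p : ∀ q, K.bdc (xp (q + 1)) = xp q - xm q

/-- `K` together with the class `thin` of thin basis elements is an
`n`-dimensional opetopic directed complex. -/
structure IsODC (K : FADC) (thin : K.B → Prop) (n : ℕ) : Prop where
  atomic : K.Atomic n
  loopFree : K.LoopFree
  unital : K.Unital
  thin_pos : ∀ b, thin b → 0 < K.dim b
  bdp_basis : ∀ b : K.B, 0 < K.dim b →
    ∃ a : K.B, ¬ thin a ∧ K.bdp (Finsupp.single b 1) = Finsupp.single a 1
  bdm_thin : ∀ b : K.B, thin b →
    ∃ a : K.B, ¬ thin a ∧ K.bdm (Finsupp.single b 1) = Finsupp.single a 1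

/-- An opetopic directed complex is reduced if every thin basis element is `∂⁻a`
for some other basis element `a`. -/
def ODCReduced (K : FADC) (thin : K.B → Prop) : Prop :=
  ∀ b, thin b → ∃ a, a ≠ b ∧ K.bdm (Finsupp.single a 1) = Finsupp.single b 1

/-- A network: finite sets of edges and vertices with partially defined source and
target functions; input edges are those with no source, output edges those with no
target. -/
structure Network where
  E : Type
  V : Type
  finE : Finite E
  finV : Finite V
  src : E → Option V
  tgt : E → Option V

namespace Network

variable (N : Network)

/-- One step of a path: the target of `e` is the source of `e'`. -/
def step (e e' : N.E) : Prop := ∃ v : N.V, N.tgt e = some v ∧ N.src e' = some v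

/-- There is a path from `e` to `e'`. -/
def PathTo (e e' : N.E) : Prop := Relation.ReflTransGen N.step e e'

/-- A network is acyclic if there is no nontrivial path from an edge to itself. -/
def Acyclic : Prop := ∀ e : N.E, ¬ Relation.TransGen N.step e e

/-- A network is linear if it is acyclic and consists of a single path
`e_0, v_1, e_1, …, v_k, e_k`. -/
def Linear : Prop := N.Acyclic ∧
  ∃ (k : ℕ) (e : Fin (k + 1) ≃ N.E) (v : Fin k ≃ N.V),
    N.src (e 0) = none ∧ N.tgt (e (Fin.last k)) = none ∧
    ∀ i : Fin k, N.tgt (e i.castSucc) = some (v i) ∧ N.src (e i.succ) = some (v i)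

/-- A network is confluent if it is acyclic, has a unique output edge, and every
vertex is the source of exactly one edge and the target of at least one edge. -/
def Confluent : Prop := N.Acyclic ∧ (∃! e : N.E, N.tgt e = none) ∧
  (∀ v : N.V, ∃! e : N.E, N.src e = some v) ∧ (∀ v : N.V, ∃ e : N.E, N.tgt e = some v)

end Network

/-- An opetopic network: an acyclic network with a unique output edge, together with
thin edges (which are inputs) and thin vertices (each the target of exactly one edge,
which is not thin). -/
structure OpetopicNetwork extends Network where
  thinE : E → Prop
  thinV : V → Prop
  acyclic : toNetwork.Acyclic
  out_unique : ∃! e : E, tgt e = none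
  thinE_input : ∀ e, thinE e → src e = none
  thinV_unique : ∀ v, thinV v → ∃! e, tgt e = some v
  thinV_nonthin : ∀ v e, thinV v → tgt e = some v → ¬ thinE e

/-- An opetopic network is reduced if every thin edge has a target vertex which is
the target of no other edge. -/
def OpetopicNetwork.Reduced (N : OpetopicNetwork) : Prop :=
  ∀ e, N.thinE e → ∃ v, N.tgt e = some v ∧ ∀ e', N.tgt e' = some v → e' = e

/-- `c` is a constellation from `N` to `P`: a bijection from the vertices of `N` to
the input edges of `P`, preserving thinness, such that for every edge `e` of `P`
there is exactly one edge of `N` with a source but not a target in the preimage of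
`I_e` (the input edges of `P` from which there is a path to `e`). -/
def IsConstellation (N P : OpetopicNetwork) (c : N.V → P.E) : Prop :=
  (∀ v, P.src (c v) = none) ∧
  Function.Injective c ∧
  (∀ e : P.E, P.src e = none → ∃ v, c v = e) ∧
  (∀ v, N.thinV v ↔ P.thinE (c v)) ∧
  (∀ e : P.E, ∃! e' : N.E,
    (∃ v, N.src e' = some v ∧ P.toNetwork.PathTo (c v) e) ∧
    ¬ (∃ v, N.tgt e' = some v ∧ P.toNetwork.PathTo (c v) e))

/-- An `n`-dimensional opetopic sequence `N_0 → N_1 → … → N_n`. -/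
structure OpetopicSequence (n : ℕ) where
  N : Fin (n + 1) → OpetopicNetwork
  c : ∀ q : Fin n, (N q.castSucc).V → (N q.succ).E
  constell : ∀ q : Fin n, IsConstellation (N q.castSucc) (N q.succ) (c q)
  linear0 : (N 0).toNetwork.Linear
  noThin0 : ∀ e, ¬ (N 0).thinE e
  top_single : ∃! _e : (N (Fin.last n)).E, True
  top_noV : IsEmpty (N (Fin.last n)).V

/-- An isomorphism of opetopic sequences: families of bijections on edges and
vertices preserving sources, targets, thin edges and thin vertices, and commuting
with the constellations. -/
def SeqIso (n : ℕ) (S S' : OpetopicSequence n) : Prop :=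
  ∃ (fE : ∀ q : Fin (n + 1), (S.N q).E ≃ (S'.N q).E)
    (fV : ∀ q : Fin (n + 1), (S.N q).V ≃ (S'.N q).V),
    (∀ q : Fin (n + 1),
      (∀ e v, (S.N q).src e = some v ↔ (S'.N q).src (fE q e) = some (fV q v)) ∧
      (∀ e v, (S.N q).tgt e = some v ↔ (S'.N q).tgt (fE q e) = some (fV q v)) ∧
      (∀ e, (S.N q).thinE e ↔ (S'.N q).thinE (fE q e)) ∧
      (∀ v, (S.N q).thinV v ↔ (S'.N q).thinV (fV q v))) ∧
    (∀ q : Fin n, ∀ v, fE q.succ (S.c q v) = S'.c q (fV q.castSucc v))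

/-- The opetopic sequence `S` realizes the sequence
`G_0^-(⟨K⟩) → … → G_n^-(⟨K⟩)` associated to the opetopic directed complex `K`
(with top basis element `g` and thin elements `thin`): the edges of `S.N q`
correspond bijectively to the terms of `g_q^-(⟨K⟩)`, the vertices to the terms of
`⟨K⟩_{q+1}^-`, sources, targets and thinness are as prescribed by `∂⁺`, `∂⁻` and
`thin`, and the constellations are the identity correspondences. -/
def RealizedBy (K : FADC) (thin : K.B → Prop) (n : ℕ) (g : K.B)
    (S : OpetopicSequence n) : Prop :=
  ∃ (eE : ∀ q : Fin (n + 1), (S.N q).E → K.B)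
    (eV : ∀ q : Fin (n + 1), (S.N q).V → K.B),
    (∀ q : Fin (n + 1),
      Function.Injective (eE q) ∧
      (∀ ed, eE q ed ∈ (K.gch (K.atomNeg g n q.1) (K.atomNeg g n (q.1 + 1))).support) ∧
      (∀ b ∈ (K.gch (K.atomNeg g n q.1) (K.atomNeg g n (q.1 + 1))).support,
        ∃ ed, eE q ed = b) ∧
      Function.Injective (eV q) ∧
      (∀ v, eV q v ∈ (K.atomNeg g n (q.1 + 1)).support) ∧
      (∀ b ∈ (K.atomNeg g n (q.1 + 1)).support, ∃ v, eV q v = b) ∧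
      (∀ ed v, (S.N q).src ed = some v ↔
        eE q ed ∈ (K.bdp (Finsupp.single (eV q v) 1)).support) ∧
      (∀ ed v, (S.N q).tgt ed = some v ↔
        eE q ed ∈ (K.bdm (Finsupp.single (eV q v) 1)).support) ∧
      (∀ ed, (S.N q).thinE ed ↔ thin (eE q ed)) ∧
      (∀ v, (S.N q).thinV v ↔ thin (eV q v))) ∧
    (∀ q : Fin n, ∀ v, eE q.succ (S.c q v) = eV q.castSucc v)

/-- A bundled `n`-dimensional opetopic directed complex. -/
structure ODCBundle (n : ℕ) where
  K : FADC
  thin : K.B → Prop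
  g : K.B
  dim_g : K.dim g = n
  isODC : IsODC K thin n

/-- Isomorphism of (bundled) opetopic directed complexes: a dimension- and
thinness-preserving bijection of bases commuting with boundaries and augmentations. -/
def ODCIso {n : ℕ} (A A' : ODCBundle n) : Prop :=
  ∃ φ : A.K.B ≃ A'.K.B,
    (∀ b, A'.K.dim (φ b) = A.K.dim b) ∧
    (∀ b, A'.thin (φ b) ↔ A.thin b) ∧
    (∀ b, A'.K.bd (φ b) = Finsupp.equivMapDomain φ (A.K.bd b)) ∧
    (∀ b, A'.K.eps (φ b) = A.K.eps b)


/-! Since `∂ = ∂⁺ - ∂⁻` and `∂∂ = 0`, the chains `∂⁻c` and `∂⁺c` have the same boundary, so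
`∂⁺∂⁻ = ∂⁺∂⁺` and `∂⁻∂⁺ = ∂⁻∂⁻`. Hence `∂((∂⁻)^r g) = (∂⁺)^{r+1} g - (∂⁻)^{r+1} g = ∂((∂⁺)^r g)`,
which are the boundary conditions of `νK`; the augmentation conditions are unitality at `g`. -/

namespace FADC

variable (K : FADC)

theorem bdc_eq_linearCombination : K.bdc = Finsupp.linearCombination ℤ K.bd := by
  ext c : 1
  rw [Finsupp.linearCombination_apply]
  rfl

theorem bdc_zero : K.bdc 0 = 0 := by
  simp [bdc_eq_linearCombination]

theorem bdc_sub (c c' : K.B →₀ ℤ) : K.bdc (c - c') = K.bdc c - K.bdc c' := by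
  simp [bdc_eq_linearCombination]

theorem bdc_bdc (c : K.B →₀ ℤ) : K.bdc (K.bdc c) = 0 := by
  rw [bdc_eq_linearCombination, ← LinearMap.comp_apply]
  suffices Finsupp.linearCombination ℤ K.bd ∘ₗ Finsupp.linearCombination ℤ K.bd = 0 by
    rw [this, LinearMap.zero_apply]
  refine Finsupp.lhom_ext fun a k => ?_
  have h : Finsupp.linearCombination ℤ K.bd (K.bd a) = 0 := by
    rw [← bdc_eq_linearCombination]
    exact K.bd_bd a
  simp [h]

theorem bdp_sub_bdm (c : K.B →₀ ℤ) : K.bdp c - K.bdm c = K.bdc c := by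
  ext b
  simp only [bdp, bdm, Finsupp.sub_apply, Finsupp.mapRange_apply, Finsupp.neg_apply]
  omega

theorem bdc_bdm_eq_bdc_bdp (c : K.B →₀ ℤ) : K.bdc (K.bdm c) = K.bdc (K.bdp c) := by
  rw [eq_comm, ← sub_eq_zero, ← bdc_sub, bdp_sub_bdm, bdc_bdc]

theorem bdp_bdm (c : K.B →₀ ℤ) : K.bdp (K.bdm c) = K.bdp (K.bdp c) := by
  rw [bdp, bdp, bdc_bdm_eq_bdc_bdp]

theorem bdm_bdp (c : K.B →₀ ℤ) : K.bdm (K.bdp c) = K.bdm (K.bdm c) := by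
  rw [bdm, bdm, bdc_bdm_eq_bdc_bdp]

theorem bdp_iterate_bdm (r : ℕ) (c : K.B →₀ ℤ) : K.bdp (K.bdm^[r] c) = K.bdp^[r + 1] c := by
  induction r with
  | zero => rfl
  | succ r ih =>
    rw [Function.iterate_succ_apply', bdp_bdm, ih, ← Function.iterate_succ_apply' K.bdp]

theorem bdm_iterate_bdp (r : ℕ) (c : K.B →₀ ℤ) : K.bdm (K.bdp^[r] c) = K.bdm^[r + 1] c := by
  induction r with
  | zero => rfl
  | succ r ih =>
    rw [Function.iterate_succ_apply', bdm_bdp, ih, ← Function.iterate_succ_apply' K.bdm]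

theorem bdc_iterate_bdm (r : ℕ) (c : K.B →₀ ℤ) :
    K.bdc (K.bdm^[r] c) = K.bdp^[r + 1] c - K.bdm^[r + 1] c := by
  rw [← bdp_sub_bdm, bdp_iterate_bdm, ← Function.iterate_succ_apply' K.bdm]

theorem bdc_iterate_bdp (r : ℕ) (c : K.B →₀ ℤ) :
    K.bdc (K.bdp^[r] c) = K.bdp^[r + 1] c - K.bdm^[r + 1] c := by
  rw [← bdp_sub_bdm, bdm_iterate_bdp, ← Function.iterate_succ_apply' K.bdp]

theorem bdm_nonneg (c : K.B →₀ ℤ) : 0 ≤ K.bdm c :=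
  fun b => by simp [bdm]

theorem bdp_nonneg (c : K.B →₀ ℤ) : 0 ≤ K.bdp c :=
  fun b => by simp [bdp]

/-- The chain `c` lies in `K_m`. -/
def IsChainOfDim (c : K.B →₀ ℤ) (m : ℕ) : Prop := ∀ b ∈ c.support, K.dim b = m

variable {K}

theorem isChainOfDim_single (b : K.B) (k : ℤ) : K.IsChainOfDim (Finsupp.single b k) (K.dim b) :=
  fun _ hb => by rw [Finset.mem_singleton.mp (Finsupp.support_single_subset hb)]

theorem IsChainOfDim.bdc {c : K.B →₀ ℤ} {m : ℕ} (hc : K.IsChainOfDim c (m + 1)) :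
    K.IsChainOfDim (K.bdc c) m := by
  classical
  intro b hb
  obtain ⟨a, ha, hba⟩ := Finset.mem_biUnion.mp (Finsupp.support_sum hb)
  have := K.bd_dim a b (Finsupp.support_smul hba)
  have := hc a ha
  omega

theorem IsChainOfDim.bdp {c : K.B →₀ ℤ} {m : ℕ} (hc : K.IsChainOfDim c (m + 1)) :
    K.IsChainOfDim (K.bdp c) m :=
  fun b hb => hc.bdc b (Finsupp.support_mapRange hb)

theorem IsChainOfDim.bdm {c : K.B →₀ ℤ} {m : ℕ} (hc : K.IsChainOfDim c (m + 1)) :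
    K.IsChainOfDim (K.bdm c) m :=
  fun b hb => hc.bdc b (by simpa using Finsupp.support_mapRange hb)

theorem IsChainOfDim.iterate {f : (K.B →₀ ℤ) → K.B →₀ ℤ}
    (hf : ∀ c m, K.IsChainOfDim c (m + 1) → K.IsChainOfDim (f c) m) {c : K.B →₀ ℤ} {m : ℕ} :
    ∀ r, K.IsChainOfDim c (m + r) → K.IsChainOfDim (f^[r] c) m
  | 0, hc => hc
  | r + 1, hc => by
    rw [Function.iterate_succ_apply']
    exact hf _ _ (IsChainOfDim.iterate hf r (by rwa [← add_assoc, add_right_comm] at hc))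

end FADC

theorem iterate_nonneg {α : Type*} [Preorder α] [Zero α] {f : α → α} (hf : ∀ c, 0 ≤ f c)
    {c : α} (hc : 0 ≤ c) : ∀ r, 0 ≤ f^[r] c
  | 0 => hc
  | r + 1 => by
    rw [Function.iterate_succ_apply']
    exact hf _

namespace FADC

variable (K : FADC) (g : K.B) {n q : ℕ}

theorem atomNeg_of_le (hq : q ≤ n) : K.atomNeg g n q = K.bdm^[n - q] (Finsupp.single g 1) :=
  if_pos hq

theorem atomPos_of_le (hq : q ≤ n) : K.atomPos g n q = K.bdp^[n - q] (Finsupp.single g 1) :=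
  if_pos hq

theorem atomNeg_of_lt (hq : n < q) : K.atomNeg g n q = 0 :=
  if_neg (Nat.not_le_of_lt hq)

theorem atomPos_of_lt (hq : n < q) : K.atomPos g n q = 0 :=
  if_neg (Nat.not_le_of_lt hq)

theorem atomNeg_nonneg : 0 ≤ K.atomNeg g n q := by
  unfold atomNeg
  split_ifs
  · exact iterate_nonneg K.bdm_nonneg (Finsupp.single_nonneg.mpr zero_le_one) _
  · exact le_rfl

theorem atomPos_nonneg : 0 ≤ K.atomPos g n q := by
  unfold atomPos
  split_ifs
  · exact iterate_nonneg K.bdp_nonneg (Finsupp.single_nonneg.mpr zero_le_one) _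
  · exact le_rfl

variable {K g}

theorem isChainOfDim_atomNeg (hg : K.dim g = n) (q : ℕ) : K.IsChainOfDim (K.atomNeg g n q) q := by
  unfold atomNeg
  split_ifs with hq
  · refine IsChainOfDim.iterate (fun _ _ h => h.bdm) (n - q) ?_
    rw [Nat.add_sub_cancel' hq, ← hg]
    exact isChainOfDim_single g 1
  · simp [IsChainOfDim]

theorem isChainOfDim_atomPos (hg : K.dim g = n) (q : ℕ) : K.IsChainOfDim (K.atomPos g n q) q := by
  unfold atomPos
  split_ifs with hq
  · refine IsChainOfDim.iterate (fun _ _ h => h.bdp) (n - q) ?_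
    rw [Nat.add_sub_cancel' hq, ← hg]
    exact isChainOfDim_single g 1
  · simp [IsChainOfDim]

variable (K g n q)

theorem bdc_atomNeg_succ :
    K.bdc (K.atomNeg g n (q + 1)) = K.atomPos g n q - K.atomNeg g n q := by
  rcases lt_trichotomy q n with hq | rfl | hq
  · obtain ⟨r, rfl⟩ := Nat.exists_eq_add_of_lt hq
    rw [atomNeg_of_le K g hq, atomPos_of_le K g hq.le, atomNeg_of_le K g hq.le,
      show q + r + 1 - (q + 1) = r by omega, show q + r + 1 - q = r + 1 by omega, bdc_iterate_bdm]
  · rw [atomNeg_of_lt K g q.lt_succ_self, atomPos_of_le K g le_rfl, atomNeg_of_le K g le_rfl,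
      Nat.sub_self, Function.iterate_zero_apply,
      Function.iterate_zero_apply, bdc_zero, sub_self]
  · rw [atomNeg_of_lt K g (hq.trans q.lt_succ_self), atomPos_of_lt K g hq, atomNeg_of_lt K g hq,
      bdc_zero, sub_zero]

theorem bdc_atomPos_succ :
    K.bdc (K.atomPos g n (q + 1)) = K.atomPos g n q - K.atomNeg g n q := by
  rcases lt_trichotomy q n with hq | rfl | hq
  · obtain ⟨r, rfl⟩ := Nat.exists_eq_add_of_lt hq
    rw [atomPos_of_le K g hq, atomPos_of_le K g hq.le, atomNeg_of_le K g hq.le,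
      show q + r + 1 - (q + 1) = r by omega, show q + r + 1 - q = r + 1 by omega, bdc_iterate_bdp]
  · rw [atomPos_of_lt K g q.lt_succ_self, atomPos_of_le K g le_rfl, atomNeg_of_le K g le_rfl,
      Nat.sub_self, Function.iterate_zero_apply,
      Function.iterate_zero_apply, bdc_zero, sub_self]
  · rw [atomPos_of_lt K g (hq.trans q.lt_succ_self), atomPos_of_lt K g hq, atomNeg_of_lt K g hq,
      bdc_zero, sub_zero]

end FADC

theorem stmt5_general (K : FADC) (n : ℕ) (hU : K.Unital)
    (g : K.B) (hg : K.dim g = n) :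
    NuMem K (K.atomNeg g n) (K.atomPos g n) :=
  { dim_m := K.isChainOfDim_atomNeg hg
    dim_p := K.isChainOfDim_atomPos hg
    nonneg_m _ := Finsupp.le_def.mp (K.atomNeg_nonneg g)
    nonneg_p _ := Finsupp.le_def.mp (K.atomPos_nonneg g)
    fin := ⟨n, fun _ hq => ⟨K.atomNeg_of_lt g hq, K.atomPos_of_lt g hq⟩⟩
    eps_m := by
      rw [K.atomNeg_of_le g n.zero_le, Nat.sub_zero, ← hg]
      exact (hU g).1
    eps_p := by
      rw [K.atomPos_of_le g n.zero_le, Nat.sub_zero, ← hg]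
      exact (hU g).2
    bd_m := K.bdc_atomNeg_succ g n
    bd_p := K.bdc_atomPos_succ g n }

/-- The canonical atom `⟨K⟩` of an `n`-dimensional atomic unital free augmented
directed complex `K` with top basis element `g` is a member of `νK`. -/
theorem stmt5 (K : FADC) (n : ℕ) (hA : K.Atomic n) (hU : K.Unital)
    (g : K.B) (hg : K.dim g = n) :
    NuMem K (K.atomNeg g n) (K.atomPos g n) :=
  stmt5_general K n hU g hg
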